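/- arXiv:0902.0086 — 2 statements merged into one kernel-verified Lean document; each statement's English description precedes it below -/
import Mathlib

section
/- Let u : ℝ⁴ → ℝ be smooth in variables (t,x,y,z) and let λ ∈ ℝ. If q : ℝ⁴ → ℝ is smooth and satisfies the linear system q_t = (u_{xy} − λ) q_x − u_{xx} q_y and q_z = u_{yy} q_x − (u_{xy} + λ) q_y, then the compatibility condition (q_t)_z = (q_z)_t yields, after substituting the system and using equality of mixed partial derivatives of u and q, the identity (u_{xz} − u_{ty} − u_{xx} u_{yy} + u_{xy}²)_x · q_y = (u_{xz} − u_{ty} − u_{xx} u_{yy} + u_{xy}²)_y · q_x. In particular, if u satisfies Plebański's second heavenly equation u_{xz} = u_{ty} + u_{xx} u_{yy} − u_{xy}², then ∂_z∂_t q = ∂_t∂_z q holds identically for every solution pair (q_x, q_y) of the first-order system. -/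
noncomputable def pd (i : Fin 4) (f : (Fin 4 → ℝ) → ℝ) (x : Fin 4 → ℝ) : ℝ :=
  deriv (fun s => f (Function.update x i s)) (x i)

lemma update_eq_affine (x : Fin 4 → ℝ) (i : Fin 4) (s : ℝ) :
    Function.update x i s = x + (s - x i) • (Pi.single i 1 : Fin 4 → ℝ) := by
  funext j
  rcases eq_or_ne j i with h | h
  · subst h; simp
  · simp [Function.update_of_ne h, Pi.single_eq_of_ne h]

lemma slice_hasDerivAt {f : (Fin 4 → ℝ) → ℝ} {x : Fin 4 → ℝ} (i : Fin 4)
    (hf : DifferentiableAt ℝ f x) :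
    HasDerivAt (fun s => f (Function.update x i s)) (fderiv ℝ f x (Pi.single i 1)) (x i) := by
  have hg : HasDerivAt (fun s : ℝ => x + (s - x i) • (Pi.single i 1 : Fin 4 → ℝ))
      (Pi.single i 1) (x i) := by
    have h := (((hasDerivAt_id (x i)).sub_const (x i)).smul_const
      (Pi.single i 1 : Fin 4 → ℝ)).const_add x
    simpa using h
  have hx : x + ((x i) - x i) • (Pi.single i 1 : Fin 4 → ℝ) = x := by simp
  have hfx : HasFDerivAt f (fderiv ℝ f x)
      (x + ((x i) - x i) • (Pi.single i 1 : Fin 4 → ℝ)) := by rw [hx]; exact hf.hasFDerivAt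
  have h2 := hfx.comp_hasDerivAt (x i) hg
  have hfun : (fun s : ℝ => f (Function.update x i s))
      = f ∘ (fun s : ℝ => x + (s - x i) • (Pi.single i 1 : Fin 4 → ℝ)) := by
    funext s; simp [Function.comp, update_eq_affine x i s]
  rw [hfun]; exact h2

lemma pd_eq_fderiv {f : (Fin 4 → ℝ) → ℝ} {x : Fin 4 → ℝ} (i : Fin 4)
    (hf : DifferentiableAt ℝ f x) :
    pd i f x = fderiv ℝ f x (Pi.single i 1) := (slice_hasDerivAt i hf).deriv

lemma pd_contDiff {f : (Fin 4 → ℝ) → ℝ} (hf : ContDiff ℝ (⊤ : ℕ∞) f) (i : Fin 4) :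
    ContDiff ℝ (⊤ : ℕ∞) (pd i f) := by
  have hrepr : pd i f = fun y => fderiv ℝ f y (Pi.single i 1) :=
    funext fun y => pd_eq_fderiv i (hf.differentiable (by simp) y)
  rw [hrepr]
  exact (hf.fderiv_right (m := (⊤ : ℕ∞)) (by simp)).clm_apply contDiff_const

lemma pd_comm {f : (Fin 4 → ℝ) → ℝ} (hf : ContDiff ℝ (⊤ : ℕ∞) f) (i j : Fin 4) :
    pd i (pd j f) = pd j (pd i f) := by
  have hdf : Differentiable ℝ f := hf.differentiable (by simp)
  have hd2 : Differentiable ℝ (fderiv ℝ f) :=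
    (hf.fderiv_right (m := (⊤ : ℕ∞)) (by simp)).differentiable (by simp)
  have key : ∀ (k l : Fin 4) (x : Fin 4 → ℝ), pd k (pd l f) x
      = fderiv ℝ (fderiv ℝ f) x (Pi.single k 1) (Pi.single l 1) := by
    intro k l x
    have hrepr : pd l f = fun y => fderiv ℝ f y (Pi.single l 1) :=
      funext fun y => pd_eq_fderiv l (hdf y)
    rw [hrepr, pd_eq_fderiv k (((hf.fderiv_right (m := (⊤ : ℕ∞)) (by simp)).clm_apply
      contDiff_const).differentiable (by simp) x)]
    rw [fderiv_clm_apply (hd2 x) (differentiableAt_const _)]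
    simp
  funext x
  rw [key i j x, key j i x]
  exact (hf.contDiffAt.isSymmSndFDerivAt (by rw [minSmoothness_of_isRCLikeNormedField]; exact WithTop.coe_le_coe.2 le_top)) _ _

lemma pd_expand1 (i : Fin 4) (x : Fin 4 → ℝ) (lam : ℝ) {A Qx B Qy : (Fin 4 → ℝ) → ℝ}
    (hA : ContDiff ℝ (⊤ : ℕ∞) A) (hQx : ContDiff ℝ (⊤ : ℕ∞) Qx) (hB : ContDiff ℝ (⊤ : ℕ∞) B)
    (hQy : ContDiff ℝ (⊤ : ℕ∞) Qy) :
    pd i (fun y => (A y - lam) * Qx y - B y * Qy y) x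
      = pd i A x * Qx x + (A x - lam) * pd i Qx x
        - (pd i B x * Qy x + B x * pd i Qy x) := by
  have HA := slice_hasDerivAt i (hA.differentiable (by simp) x)
  have HQx := slice_hasDerivAt i (hQx.differentiable (by simp) x)
  have HB := slice_hasDerivAt i (hB.differentiable (by simp) x)
  have HQy := slice_hasDerivAt i (hQy.differentiable (by simp) x)
  have H := (((HA.sub_const lam).mul HQx).sub (HB.mul HQy)).deriv
  simp only [Function.update_eq_self, Pi.mul_def, Pi.sub_def, Pi.add_def] at H
  show deriv (fun s => (A (Function.update x i s) - lam) * Qx (Function.update x i s)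
      - B (Function.update x i s) * Qy (Function.update x i s)) (x i) = _
  rw [H, pd_eq_fderiv i (hA.differentiable (by simp) x), pd_eq_fderiv i (hQx.differentiable (by simp) x),
    pd_eq_fderiv i (hB.differentiable (by simp) x), pd_eq_fderiv i (hQy.differentiable (by simp) x)]

lemma pd_expand2 (i : Fin 4) (x : Fin 4 → ℝ) (lam : ℝ) {C Qx A Qy : (Fin 4 → ℝ) → ℝ}
    (hC : ContDiff ℝ (⊤ : ℕ∞) C) (hQx : ContDiff ℝ (⊤ : ℕ∞) Qx) (hA : ContDiff ℝ (⊤ : ℕ∞) A)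
    (hQy : ContDiff ℝ (⊤ : ℕ∞) Qy) :
    pd i (fun y => C y * Qx y - (A y + lam) * Qy y) x
      = pd i C x * Qx x + C x * pd i Qx x
        - (pd i A x * Qy x + (A x + lam) * pd i Qy x) := by
  have HA := slice_hasDerivAt i (hA.differentiable (by simp) x)
  have HQx := slice_hasDerivAt i (hQx.differentiable (by simp) x)
  have HC := slice_hasDerivAt i (hC.differentiable (by simp) x)
  have HQy := slice_hasDerivAt i (hQy.differentiable (by simp) x)
  have H := ((HC.mul HQx).sub ((HA.add_const lam).mul HQy)).deriv
  simp only [Function.update_eq_self, Pi.mul_def, Pi.sub_def, Pi.add_def] at H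
  show deriv (fun s => C (Function.update x i s) * Qx (Function.update x i s)
      - (A (Function.update x i s) + lam) * Qy (Function.update x i s)) (x i) = _
  rw [H, pd_eq_fderiv i (hA.differentiable (by simp) x), pd_eq_fderiv i (hQx.differentiable (by simp) x),
    pd_eq_fderiv i (hC.differentiable (by simp) x), pd_eq_fderiv i (hQy.differentiable (by simp) x)]

lemma pd_expandF (i : Fin 4) (x : Fin 4 → ℝ) {F G H K M : (Fin 4 → ℝ) → ℝ}
    (hF : ContDiff ℝ (⊤ : ℕ∞) F) (hG : ContDiff ℝ (⊤ : ℕ∞) G) (hH : ContDiff ℝ (⊤ : ℕ∞) H)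
    (hK : ContDiff ℝ (⊤ : ℕ∞) K) (hM : ContDiff ℝ (⊤ : ℕ∞) M) :
    pd i (fun y => (F y - G y - H y * K y) + M y * M y) x
      = (pd i F x - pd i G x - (pd i H x * K x + H x * pd i K x))
        + (pd i M x * M x + M x * pd i M x) := by
  have HF := slice_hasDerivAt i (hF.differentiable (by simp) x)
  have HG := slice_hasDerivAt i (hG.differentiable (by simp) x)
  have HH := slice_hasDerivAt i (hH.differentiable (by simp) x)
  have HK := slice_hasDerivAt i (hK.differentiable (by simp) x)
  have HM := slice_hasDerivAt i (hM.differentiable (by simp) x)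
  have Hd := (((HF.sub HG).sub (HH.mul HK)).add (HM.mul HM)).deriv
  simp only [Function.update_eq_self, Pi.mul_def, Pi.sub_def, Pi.add_def] at Hd
  show deriv (fun s => (F (Function.update x i s) - G (Function.update x i s)
      - H (Function.update x i s) * K (Function.update x i s))
      + M (Function.update x i s) * M (Function.update x i s)) (x i) = _
  rw [Hd, pd_eq_fderiv i (hF.differentiable (by simp) x), pd_eq_fderiv i (hG.differentiable (by simp) x),
    pd_eq_fderiv i (hH.differentiable (by simp) x), pd_eq_fderiv i (hK.differentiable (by simp) x),
    pd_eq_fderiv i (hM.differentiable (by simp) x)]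

/-- `F = u_{xz} - u_{ty} - u_{xx} u_{yy} + u_{xy}^2` (coords: 0=t, 1=x, 2=y, 3=z). -/
noncomputable def heavenlyF (u : (Fin 4 → ℝ) → ℝ) (x : Fin 4 → ℝ) : ℝ :=
  pd 1 (pd 3 u) x - pd 0 (pd 2 u) x
    - pd 1 (pd 1 u) x * pd 2 (pd 2 u) x + (pd 1 (pd 2 u) x) ^ 2

/-- Lax operator `L₁ = ∂_t - (u_{xy} - λ) ∂_x + u_{xx} ∂_y`. -/
noncomputable def laxL1 (u : (Fin 4 → ℝ) → ℝ) (lam : ℝ) (f : (Fin 4 → ℝ) → ℝ)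
    (x : Fin 4 → ℝ) : ℝ :=
  pd 0 f x - (pd 1 (pd 2 u) x - lam) * pd 1 f x + pd 1 (pd 1 u) x * pd 2 f x

/-- Lax operator `L₂ = ∂_z - u_{yy} ∂_x + (u_{xy} + λ) ∂_y`. -/
noncomputable def laxL2 (u : (Fin 4 → ℝ) → ℝ) (lam : ℝ) (f : (Fin 4 → ℝ) → ℝ)
    (x : Fin 4 → ℝ) : ℝ :=
  pd 3 f x - pd 2 (pd 2 u) x * pd 1 f x + (pd 1 (pd 2 u) x + lam) * pd 2 f x

theorem stmt0 (u q : (Fin 4 → ℝ) → ℝ) (lam : ℝ)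
    (hu : ContDiff ℝ (⊤ : ℕ∞) u) (hq : ContDiff ℝ (⊤ : ℕ∞) q)
    (h1 : ∀ x, pd 0 q x = (pd 1 (pd 2 u) x - lam) * pd 1 q x - pd 1 (pd 1 u) x * pd 2 q x)
    (h2 : ∀ x, pd 3 q x = pd 2 (pd 2 u) x * pd 1 q x - (pd 1 (pd 2 u) x + lam) * pd 2 q x) :
    (∀ x, pd 1 (heavenlyF u) x * pd 2 q x = pd 2 (heavenlyF u) x * pd 1 q x) ∧
    ((∀ x, heavenlyF u x = 0) → ∀ x, pd 3 (pd 0 q) x = pd 0 (pd 3 q) x) := by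
  have su1 : ContDiff ℝ (⊤ : ℕ∞) (pd 1 u) := pd_contDiff hu 1
  have su2 : ContDiff ℝ (⊤ : ℕ∞) (pd 2 u) := pd_contDiff hu 2
  have su3 : ContDiff ℝ (⊤ : ℕ∞) (pd 3 u) := pd_contDiff hu 3
  have sa : ContDiff ℝ (⊤ : ℕ∞) (pd 1 (pd 2 u)) := pd_contDiff su2 1
  have sb : ContDiff ℝ (⊤ : ℕ∞) (pd 1 (pd 1 u)) := pd_contDiff su1 1
  have sc : ContDiff ℝ (⊤ : ℕ∞) (pd 2 (pd 2 u)) := pd_contDiff su2 2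
  have s13 : ContDiff ℝ (⊤ : ℕ∞) (pd 1 (pd 3 u)) := pd_contDiff su3 1
  have s02 : ContDiff ℝ (⊤ : ℕ∞) (pd 0 (pd 2 u)) := pd_contDiff su2 0
  have sqx : ContDiff ℝ (⊤ : ℕ∞) (pd 1 q) := pd_contDiff hq 1
  have sqy : ContDiff ℝ (⊤ : ℕ∞) (pd 2 q) := pd_contDiff hq 2
  have h1f : pd 0 q = fun y => (pd 1 (pd 2 u) y - lam) * pd 1 q y
      - pd 1 (pd 1 u) y * pd 2 q y := funext h1
  have h2f : pd 3 q = fun y => pd 2 (pd 2 u) y * pd 1 q y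
      - (pd 1 (pd 2 u) y + lam) * pd 2 q y := funext h2
  refine ⟨fun x => ?_, fun _ x => congrFun (pd_comm hq 3 0) x⟩
  have E1 : pd 3 (pd 0 q) x = pd 3 (pd 1 (pd 2 u)) x * pd 1 q x
      + (pd 1 (pd 2 u) x - lam) * pd 3 (pd 1 q) x
      - (pd 3 (pd 1 (pd 1 u)) x * pd 2 q x + pd 1 (pd 1 u) x * pd 3 (pd 2 q) x) := by
    rw [h1f]; exact pd_expand1 3 x lam sa sqx sb sqy
  have E5 : pd 1 (pd 0 q) x = pd 1 (pd 1 (pd 2 u)) x * pd 1 q x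
      + (pd 1 (pd 2 u) x - lam) * pd 1 (pd 1 q) x
      - (pd 1 (pd 1 (pd 1 u)) x * pd 2 q x + pd 1 (pd 1 u) x * pd 1 (pd 2 q) x) := by
    rw [h1f]; exact pd_expand1 1 x lam sa sqx sb sqy
  have E6 : pd 2 (pd 0 q) x = pd 2 (pd 1 (pd 2 u)) x * pd 1 q x
      + (pd 1 (pd 2 u) x - lam) * pd 2 (pd 1 q) x
      - (pd 2 (pd 1 (pd 1 u)) x * pd 2 q x + pd 1 (pd 1 u) x * pd 2 (pd 2 q) x) := by
    rw [h1f]; exact pd_expand1 2 x lam sa sqx sb sqy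
  have E2 : pd 0 (pd 3 q) x = pd 0 (pd 2 (pd 2 u)) x * pd 1 q x
      + pd 2 (pd 2 u) x * pd 0 (pd 1 q) x
      - (pd 0 (pd 1 (pd 2 u)) x * pd 2 q x + (pd 1 (pd 2 u) x + lam) * pd 0 (pd 2 q) x) := by
    rw [h2f]; exact pd_expand2 0 x lam sc sqx sa sqy
  have E3 : pd 1 (pd 3 q) x = pd 1 (pd 2 (pd 2 u)) x * pd 1 q x
      + pd 2 (pd 2 u) x * pd 1 (pd 1 q) x
      - (pd 1 (pd 1 (pd 2 u)) x * pd 2 q x + (pd 1 (pd 2 u) x + lam) * pd 1 (pd 2 q) x) := by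
    rw [h2f]; exact pd_expand2 1 x lam sc sqx sa sqy
  have E4 : pd 2 (pd 3 q) x = pd 2 (pd 2 (pd 2 u)) x * pd 1 q x
      + pd 2 (pd 2 u) x * pd 2 (pd 1 q) x
      - (pd 2 (pd 1 (pd 2 u)) x * pd 2 q x + (pd 1 (pd 2 u) x + lam) * pd 2 (pd 2 q) x) := by
    rw [h2f]; exact pd_expand2 2 x lam sc sqx sa sqy
  rw [pd_comm hq 2 1] at E4 E6
  rw [pd_comm hq 3 1, pd_comm hq 3 2, E3, E4] at E1
  rw [pd_comm hq 0 1, pd_comm hq 0 2, E5, E6] at E2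
  have key : pd 3 (pd 0 q) x = pd 0 (pd 3 q) x := congrFun (pd_comm hq 3 0) x
  rw [E1, E2] at key
  rw [pd_comm su2 3 1, pd_comm su1 3 1, pd_comm su2 2 1, pd_comm su1 2 1,
    pd_comm hu 3 2, pd_comm hu 3 1, pd_comm hu 2 1] at key
  have hFeq : heavenlyF u = fun y => (pd 1 (pd 3 u) y - pd 0 (pd 2 u) y
      - pd 1 (pd 1 u) y * pd 2 (pd 2 u) y) + pd 1 (pd 2 u) y * pd 1 (pd 2 u) y := by
    funext y; simp only [heavenlyF]; ring
  have G1 : pd 1 (heavenlyF u) x = (pd 1 (pd 1 (pd 3 u)) x - pd 1 (pd 0 (pd 2 u)) x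
      - (pd 1 (pd 1 (pd 1 u)) x * pd 2 (pd 2 u) x + pd 1 (pd 1 u) x * pd 1 (pd 2 (pd 2 u)) x))
      + (pd 1 (pd 1 (pd 2 u)) x * pd 1 (pd 2 u) x + pd 1 (pd 2 u) x * pd 1 (pd 1 (pd 2 u)) x) := by
    rw [hFeq]; exact pd_expandF 1 x s13 s02 sb sc sa
  have G2 : pd 2 (heavenlyF u) x = (pd 2 (pd 1 (pd 3 u)) x - pd 2 (pd 0 (pd 2 u)) x
      - (pd 2 (pd 1 (pd 1 u)) x * pd 2 (pd 2 u) x + pd 1 (pd 1 u) x * pd 2 (pd 2 (pd 2 u)) x))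
      + (pd 2 (pd 1 (pd 2 u)) x * pd 1 (pd 2 u) x + pd 1 (pd 2 u) x * pd 2 (pd 1 (pd 2 u)) x) := by
    rw [hFeq]; exact pd_expandF 2 x s13 s02 sb sc sa
  rw [pd_comm su2 1 0] at G1
  rw [pd_comm su3 2 1, pd_comm su2 2 0, pd_comm su2 2 1, pd_comm su1 2 1, pd_comm hu 2 1] at G2
  rw [G1, G2]
  linear_combination -key
end

section
/- Conversely, if u : ℝ⁴ → ℝ is smooth and the operators L₁ = ∂_t − (u_{xy} − λ) ∂_x + u_{xx} ∂_y and L₂ = ∂_z − u_{yy} ∂_x + (u_{xy} + λ) ∂_y commute for every λ ∈ ℝ (equivalently, for one fixed λ, the commutator vanishes as a first-order operator), then the function F = u_{xz} − u_{ty} − u_{xx} u_{yy} + u_{xy}² satisfies F_x = 0 and F_y = 0, i.e. F depends only on (t,z). -/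
namespace PDX

variable {f g h : (Fin 4 → ℝ) → ℝ} {x : Fin 4 → ℝ} {i j : Fin 4}

lemma hasDerivAt_update (x : Fin 4 → ℝ) (i : Fin 4) (s : ℝ) :
    HasDerivAt (fun t => Function.update x i t) ((Pi.single i 1 : Fin 4 → ℝ)) s := by
  have key : (fun t : ℝ => Function.update x i t)
      = fun t => x + (t - x i) • (Pi.single i 1 : Fin 4 → ℝ) := by
    funext t j
    rcases eq_or_ne j i with rfl | hji
    · simp
    · simp [Function.update_of_ne hji, Pi.single_eq_of_ne hji]
  rw [key]
  simpa using
    (((hasDerivAt_id s).sub_const (x i)).smul_const ((Pi.single i 1 : Fin 4 → ℝ))).const_add x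

lemma pd_hasDerivAt (hf : DifferentiableAt ℝ f x) (i : Fin 4) :
    HasDerivAt (fun s => f (Function.update x i s))
      (fderiv ℝ f x ((Pi.single i 1 : Fin 4 → ℝ))) (x i) := by
  have hx : Function.update x i (x i) = x := Function.update_eq_self i x
  have hF : HasFDerivAt f (fderiv ℝ f x) (Function.update x i (x i)) := by
    rw [hx]; exact hf.hasFDerivAt
  exact hF.comp_hasDerivAt (x i) (hasDerivAt_update x i (x i))

lemma pd_eq_fderiv (hf : DifferentiableAt ℝ f x) :
    pd i f x = fderiv ℝ f x ((Pi.single i 1 : Fin 4 → ℝ)) :=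
  (pd_hasDerivAt hf i).deriv

lemma diffLine (hg : DifferentiableAt ℝ g x) (i : Fin 4) :
    DifferentiableAt ℝ (fun s => g (Function.update x i s)) (x i) :=
  (pd_hasDerivAt hg i).differentiableAt

lemma contDiff_pd (hf : ContDiff ℝ (⊤ : ℕ∞) f) (i : Fin 4) : ContDiff ℝ (⊤ : ℕ∞) (pd i f) := by
  have hfd : Differentiable ℝ f := hf.differentiable (by simp)
  have : pd i f = fun x => fderiv ℝ f x ((Pi.single i 1 : Fin 4 → ℝ)) :=
    funext fun x => pd_eq_fderiv (hfd x)
  rw [this]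
  exact (hf.fderiv_right (by simp)).clm_apply contDiff_const

lemma pd_comm (hf : ContDiff ℝ (⊤ : ℕ∞) f) (i j : Fin 4) (x : Fin 4 → ℝ) :
    pd i (pd j f) x = pd j (pd i f) x := by
  have hfd : Differentiable ℝ f := hf.differentiable (by simp)
  have hf' : ContDiff ℝ (⊤ : ℕ∞) (fderiv ℝ f) := hf.fderiv_right (by simp)
  have h2 : HasFDerivAt (fderiv ℝ f) (fderiv ℝ (fderiv ℝ f) x) x :=
    (hf'.differentiable (by simp) x).hasFDerivAt
  have key : ∀ k l : Fin 4, pd k (pd l f) x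
      = fderiv ℝ (fderiv ℝ f) x ((Pi.single k 1 : Fin 4 → ℝ)) ((Pi.single l 1 : Fin 4 → ℝ)) := by
    intro k l
    have e1 : pd l f = fun y => fderiv ℝ f y ((Pi.single l 1 : Fin 4 → ℝ)) :=
      funext fun y => pd_eq_fderiv (hfd y)
    rw [e1]
    set L := ContinuousLinearMap.apply ℝ ℝ ((Pi.single l 1 : Fin 4 → ℝ)) with hL
    have hc : HasFDerivAt (fun y => fderiv ℝ f y ((Pi.single l 1 : Fin 4 → ℝ)))
        (L.comp (fderiv ℝ (fderiv ℝ f) x)) x := (L.hasFDerivAt).comp x h2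
    rw [pd_eq_fderiv hc.differentiableAt, hc.fderiv]
    rfl
  rw [key i j, key j i]
  exact second_derivative_symmetric (fun y => (hfd y).hasFDerivAt) h2 _ _

lemma pd_comm_fun (hf : ContDiff ℝ (⊤ : ℕ∞) f) (i j : Fin 4) :
    pd i (pd j f) = pd j (pd i f) :=
  funext (pd_comm hf i j)

lemma pd_neg : pd i (fun y => -(g y)) x = -pd i g x := by
  simp [pd, deriv.neg]

lemma pd_const_sub (c : ℝ) : pd i (fun y => c - g y) x = -pd i g x := by
  simp [pd, deriv_const_sub]

lemma pd_add_const (c : ℝ) : pd i (fun y => g y + c) x = pd i g x := by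
  simp [pd, deriv_add_const]

lemma pd_sub (hg : DifferentiableAt ℝ g x) (hh : DifferentiableAt ℝ h x) :
    pd i (fun y => g y - h y) x = pd i g x - pd i h x := by
  unfold pd; exact deriv_sub (diffLine hg i) (diffLine hh i)

lemma pd_add (hg : DifferentiableAt ℝ g x) (hh : DifferentiableAt ℝ h x) :
    pd i (fun y => g y + h y) x = pd i g x + pd i h x := by
  unfold pd; exact deriv_add (diffLine hg i) (diffLine hh i)

lemma pd_mul (hg : DifferentiableAt ℝ g x) (hh : DifferentiableAt ℝ h x) :
    pd i (fun y => g y * h y) x = pd i g x * h x + g x * pd i h x := by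
  unfold pd
  rw [deriv_fun_mul (diffLine hg i) (diffLine hh i), Function.update_eq_self]

lemma pd_sq (hg : DifferentiableAt ℝ g x) :
    pd i (fun y => (g y) ^ 2) x = 2 * g x * pd i g x := by
  have e : (fun y => (g y) ^ 2) = fun y => g y * g y := by funext y; ring
  rw [e, pd_mul hg hg]; ring

lemma pd_coord_same : pd i (fun y => y i) x = 1 := by
  simp [pd]

lemma pd_coord_ne (hij : j ≠ i) : pd i (fun y => y j) x = 0 := by
  simp [pd, Function.update_of_ne hij]

end PDX

open PDX in
theorem stmt2 (u : (Fin 4 → ℝ) → ℝ) (lam : ℝ) (hu : ContDiff ℝ (⊤ : ℕ∞) u)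
    (hcomm : ∀ q : (Fin 4 → ℝ) → ℝ, ContDiff ℝ (⊤ : ℕ∞) q → ∀ x,
      laxL1 u lam (laxL2 u lam q) x - laxL2 u lam (laxL1 u lam q) x = 0) :
    (∀ x, pd 1 (heavenlyF u) x = 0) ∧ (∀ x, pd 2 (heavenlyF u) x = 0) := by
  have hu2 : ∀ i : Fin 4, ContDiff ℝ (⊤ : ℕ∞) (pd i u) := fun i => contDiff_pd hu i
  have hu3 : ∀ i j : Fin 4, ContDiff ℝ (⊤ : ℕ∞) (pd i (pd j u)) := fun i j => contDiff_pd (hu2 j) i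
  have hd3 : ∀ (i j : Fin 4) (x), DifferentiableAt ℝ (pd i (pd j u)) x :=
    fun i j x => ((hu3 i j).differentiable (by simp) x)
  -- reordering of third derivatives
  have s102 : pd 1 (pd 0 (pd 2 u)) = pd 0 (pd 1 (pd 2 u)) := pd_comm_fun (hu2 2) 1 0
  have s210 : pd 2 (pd 0 (pd 2 u)) = pd 0 (pd 2 (pd 2 u)) := pd_comm_fun (hu2 2) 2 0
  have s213 : pd 2 (pd 1 (pd 3 u)) = pd 1 (pd 2 (pd 3 u)) := pd_comm_fun (hu2 3) 2 1
  have s212 : pd 2 (pd 1 (pd 2 u)) = pd 1 (pd 2 (pd 2 u)) := pd_comm_fun (hu2 2) 2 1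
  have s211 : pd 2 (pd 1 (pd 1 u)) = pd 1 (pd 1 (pd 2 u)) := by
    rw [pd_comm_fun (hu2 1) 2 1, pd_comm_fun hu 2 1]
  have s312 : pd 3 (pd 1 (pd 2 u)) = pd 1 (pd 2 (pd 3 u)) := by
    rw [pd_comm_fun (hu2 2) 3 1, pd_comm_fun hu 3 2]
  have s311 : pd 3 (pd 1 (pd 1 u)) = pd 1 (pd 1 (pd 3 u)) := by
    rw [pd_comm_fun (hu2 1) 3 1, pd_comm_fun hu 3 1]
  -- derivative of heavenlyF
  have hF : ∀ (i : Fin 4) (x), pd i (heavenlyF u) x =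
      pd i (pd 1 (pd 3 u)) x - pd i (pd 0 (pd 2 u)) x
      - (pd i (pd 1 (pd 1 u)) x * pd 2 (pd 2 u) x + pd 1 (pd 1 u) x * pd i (pd 2 (pd 2 u)) x)
      + 2 * pd 1 (pd 2 u) x * pd i (pd 1 (pd 2 u)) x := by
    intro i x
    have e1 : heavenlyF u = fun y =>
        (pd 1 (pd 3 u) y - pd 0 (pd 2 u) y - pd 1 (pd 1 u) y * pd 2 (pd 2 u) y)
          + (pd 1 (pd 2 u) y) ^ 2 := rfl
    rw [e1, pd_add (((hd3 1 3 x).fun_sub (hd3 0 2 x)).fun_sub ((hd3 1 1 x).fun_mul (hd3 2 2 x)))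
        ((hd3 1 2 x).fun_pow 2),
      pd_sub ((hd3 1 3 x).fun_sub (hd3 0 2 x)) ((hd3 1 1 x).fun_mul (hd3 2 2 x)),
      pd_sub (hd3 1 3 x) (hd3 0 2 x), pd_mul (hd3 1 1 x) (hd3 2 2 x), pd_sq (hd3 1 2 x)]
  constructor
  · -- x part, test function q = y ↦ y 2
    intro x
    have hq : ContDiff ℝ (⊤ : ℕ∞) (fun y : Fin 4 → ℝ => y 2) :=
      (ContinuousLinearMap.proj (R := ℝ) (φ := fun _ : Fin 4 => ℝ) 2).contDiff
    have l2q : laxL2 u lam (fun y => y 2) = fun x => pd 1 (pd 2 u) x + lam := by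
      funext z; unfold laxL2
      rw [pd_coord_ne (show (2:Fin 4) ≠ 3 by decide), pd_coord_ne (show (2:Fin 4) ≠ 1 by decide),
        pd_coord_same]; ring
    have l1q : laxL1 u lam (fun y => y 2) = fun x => pd 1 (pd 1 u) x := by
      funext z; unfold laxL1
      rw [pd_coord_ne (show (2:Fin 4) ≠ 0 by decide), pd_coord_ne (show (2:Fin 4) ≠ 1 by decide),
        pd_coord_same]; ring
    have hE := hcomm _ hq x
    rw [l1q, l2q] at hE
    unfold laxL1 laxL2 at hE
    simp only [pd_add_const] at hE
    rw [hF 1 x, s102]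
    rw [s212, s311, s211] at hE
    linear_combination -hE
  · -- y part, test function q = y ↦ y 1
    intro x
    have hq : ContDiff ℝ (⊤ : ℕ∞) (fun y : Fin 4 → ℝ => y 1) :=
      (ContinuousLinearMap.proj (R := ℝ) (φ := fun _ : Fin 4 => ℝ) 1).contDiff
    have l2q : laxL2 u lam (fun y => y 1) = fun x => -(pd 2 (pd 2 u) x) := by
      funext z; unfold laxL2
      rw [pd_coord_ne (show (1:Fin 4) ≠ 3 by decide), pd_coord_same,
        pd_coord_ne (show (1:Fin 4) ≠ 2 by decide)]; ring
    have l1q : laxL1 u lam (fun y => y 1) = fun x => lam - pd 1 (pd 2 u) x := by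
      funext z; unfold laxL1
      rw [pd_coord_ne (show (1:Fin 4) ≠ 0 by decide), pd_coord_same,
        pd_coord_ne (show (1:Fin 4) ≠ 2 by decide)]; ring
    have hE := hcomm _ hq x
    rw [l1q, l2q] at hE
    unfold laxL1 laxL2 at hE
    simp only [pd_neg, pd_const_sub] at hE
    rw [hF 2 x, s213, s210, s211, s212]
    rw [s312, s212] at hE
    linear_combination hE
end
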